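/- arXiv:2006.13913 — 2 statements merged into one kernel-verified Lean document; each statement's English description precedes it below -/
import Mathlib

section
/- Let Z be a normally distributed random variable with mean μ and variance σ², and let Φ denote the standard normal cumulative distribution function. Then E[Φ(Z)] = Φ(μ / √(1 + σ²)). -/
/-!
If `X ~ N(0, 1)` is independent of `Z`, then `E[Φ(Z)] = P(X ≤ Z) = P(X - Z ≤ 0)`, and for
`Z ~ N(μ, σ²)` the difference `X - Z` is again Gaussian, `N(-μ, 1 + σ²)`; standardizing it
gives `Φ(μ / √(1 + σ²))`. In measure-theoretic form, `X - Z` has law `N(0, 1) ∗ N(-μ, σ²)`.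
-/

open MeasureTheory ProbabilityTheory Set
open scoped NNReal

/-- Standard normal cumulative distribution function. -/
noncomputable def stdNormalCDF (x : ℝ) : ℝ :=
  ∫ t in Set.Iic x, gaussianPDFReal 0 1 t

lemma integral_measureReal_Iic_eq_conv (ρ ν : Measure ℝ) [IsFiniteMeasure ρ] [SFinite ν] :
    ∫ z, ρ.real (Iic z) ∂ν = (ρ ∗ ν.map (-·)).real (Iic 0) := by
  have hmeas : MeasurableSet ((fun p : ℝ × ℝ ↦ p.1 + p.2) ⁻¹' Iic 0) :=
    measurable_add measurableSet_Iic
  have hslice (z : ℝ) :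
      (fun x ↦ (x, -z)) ⁻¹' ((fun p : ℝ × ℝ ↦ p.1 + p.2) ⁻¹' Iic 0) = Iic z := by
    ext x
    simp [← sub_eq_add_neg]
  have hmono : Measurable fun z ↦ ρ (Iic z) :=
    Monotone.measurable fun _ _ h ↦ measure_mono (Iic_subset_Iic.2 h)
  rw [measureReal_def, Measure.conv, Measure.map_apply measurable_add measurableSet_Iic,
    Measure.prod_apply_symm hmeas,
    lintegral_map (measurable_measure_prodMk_right hmeas) measurable_neg]
  simp_rw [hslice]
  exact integral_toReal hmono.aemeasurable (ae_of_all _ fun _ ↦ measure_lt_top _ _)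

lemma stdNormalCDF_eq_measureReal (x : ℝ) :
    stdNormalCDF x = (gaussianReal 0 1).real (Iic x) := by
  rw [measureReal_def, gaussianReal_apply_eq_integral _ one_ne_zero, ENNReal.toReal_ofReal
    (setIntegral_nonneg measurableSet_Iic fun t _ ↦ gaussianPDFReal_nonneg 0 1 t)]
  rfl

lemma gaussianReal_map_sub_div_sqrt (m : ℝ) {w : ℝ≥0} (hw : w ≠ 0) :
    (gaussianReal m w).map (fun y ↦ (y - m) / √(w : ℝ)) = gaussianReal 0 1 := by
  have hcomp : (fun y ↦ (y - m) / √(w : ℝ)) = (· / √(w : ℝ)) ∘ (· - m) := rfl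
  rw [hcomp, ← Measure.map_map (by fun_prop) (by fun_prop), gaussianReal_map_sub_const,
    gaussianReal_map_div_const, sub_self, zero_div]
  congr
  ext
  simp [Real.sq_sqrt, hw]

lemma gaussianReal_real_Iic_eq_stdNormalCDF (m : ℝ) {w : ℝ≥0} (hw : w ≠ 0) (x : ℝ) :
    (gaussianReal m w).real (Iic x) = stdNormalCDF ((x - m) / √(w : ℝ)) := by
  have hs : 0 < √(w : ℝ) := Real.sqrt_pos.2 (by positivity)
  rw [stdNormalCDF_eq_measureReal, ← gaussianReal_map_sub_div_sqrt m hw,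
    map_measureReal_apply (by fun_prop) measurableSet_Iic]
  congr 1
  ext y
  simp [div_le_div_iff_of_pos_right hs]

/-- If `Z ~ N(μ, σ²)`, then `E[Φ(Z)] = Φ(μ / √(1 + σ²))`. -/
theorem expectation_stdNormalCDF_gaussian (μ : ℝ) (v : ℝ≥0) :
    ∫ z, stdNormalCDF z ∂(gaussianReal μ v) = stdNormalCDF (μ / Real.sqrt (1 + (v : ℝ))) := by
  calc ∫ z, stdNormalCDF z ∂(gaussianReal μ v)
      = ∫ z, (gaussianReal 0 1).real (Iic z) ∂(gaussianReal μ v) := by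
        simp_rw [stdNormalCDF_eq_measureReal]
    _ = (gaussianReal 0 1 ∗ gaussianReal (-μ) v).real (Iic 0) := by
        rw [integral_measureReal_Iic_eq_conv, gaussianReal_map_neg]
    _ = (gaussianReal (-μ) (1 + v)).real (Iic 0) := by
        rw [gaussianReal_conv_gaussianReal, zero_add]
    _ = stdNormalCDF (μ / √(1 + (v : ℝ))) := by
        rw [gaussianReal_real_Iic_eq_stdNormalCDF _ (by positivity)]
        simp
end

section
/- Let Y ∈ {0,1} with P(Y = 1 | α = t) = Φ(s(t)) where s(t) = t⟨a, w_α⟩/√(1 + aᵀW_βW_βᵀa + γ‖a‖₂²), α ~ N(0,1), Φ the standard normal CDF. Then the conditional entropy H(Y | α) = E_t[h_b(Φ(s(t)))] is, for each fixed t, a monotonically decreasing function of |s(t)|; consequently, over ‖w_α‖₂ ≤ c and arbitrary W_β, H(Y | α) is minimized when w_α = ± c a/‖a‖₂ and W_βᵀa = 0. -/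
open Matrix MeasureTheory ProbabilityTheory

/-- Conditional entropy `H(Y ∣ α) = E_{t ~ N(0,1)}[h_b(Φ(s(t)))]` where
`s(t) = t⟨a,w_α⟩ / √(1 + aᵀW_βW_βᵀa + γ‖a‖₂²)`. -/
noncomputable def condEntY {N : ℕ} (γ : ℝ) (a : Fin N → ℝ)
    (wα : Fin N → ℝ) (Wβ : Matrix (Fin N) (Fin (N - 1)) ℝ) : ℝ :=
  ∫ t, Real.binEntropy
      (stdNormalCDF (t * (a ⬝ᵥ wα) /
        Real.sqrt (1 + (Wβᵀ.mulVec a ⬝ᵥ Wβᵀ.mulVec a) + γ * (a ⬝ᵥ a))))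
    ∂(gaussianReal 0 1)

/-!
`Φ(-s) = 1 - Φ(s)` and `h_b(1 - p) = h_b(p)` make `h_b ∘ Φ` even, and on `[0, ∞)` it is the
composition of the monotone `Φ`, which takes values in `[1/2, 1]` there, with `h_b`, which is
decreasing on `[1/2, 1]`. So `h_b(Φ(s))` decreases in `|s|`, and it suffices to maximise
`|s(t)| = |t| |⟨a, w_α⟩| / √(1 + ‖W_βᵀa‖² + γ‖a‖²)` for every `t` at once. By Cauchy–Schwarz
the numerator is at most `c ‖a‖`, attained by `w_α = ± c a / ‖a‖`, and the denominator is at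
least `√(1 + γ‖a‖²)`, attained when `W_βᵀa = 0`.
-/

open Real Set
open scoped NNReal

lemma stdNormalCDF_nonneg (x : ℝ) : 0 ≤ stdNormalCDF x :=
  setIntegral_nonneg measurableSet_Iic fun t _ => gaussianPDFReal_nonneg 0 1 t

lemma stdNormalCDF_le_one (x : ℝ) : stdNormalCDF x ≤ 1 := by
  rw [← integral_gaussianPDFReal_eq_one 0 one_ne_zero]
  exact setIntegral_le_integral (integrable_gaussianPDFReal 0 1)
    (ae_of_all _ fun t => gaussianPDFReal_nonneg 0 1 t)

lemma monotone_stdNormalCDF : Monotone stdNormalCDF := fun _ _ hxy =>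
  setIntegral_mono_set (integrable_gaussianPDFReal 0 1).integrableOn
    (ae_of_all _ fun t => gaussianPDFReal_nonneg 0 1 t)
    (Iic_subset_Iic.2 hxy).eventuallyLE

lemma gaussianPDFReal_zero_neg (v : ℝ≥0) (t : ℝ) :
    gaussianPDFReal 0 v (-t) = gaussianPDFReal 0 v t := by
  simp [gaussianPDFReal]

lemma stdNormalCDF_neg (x : ℝ) : stdNormalCDF (-x) = 1 - stdNormalCDF x := by
  have h_tail : stdNormalCDF (-x) = ∫ t in Ioi x, gaussianPDFReal 0 1 t := calc
    stdNormalCDF (-x) = ∫ t in Iic (-x), gaussianPDFReal 0 1 (-t) := by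
      simp only [stdNormalCDF, gaussianPDFReal_zero_neg]
    _ = ∫ t in Ioi x, gaussianPDFReal 0 1 t := by rw [integral_comp_neg_Iic, neg_neg]
  have h_split : stdNormalCDF x + ∫ t in Ioi x, gaussianPDFReal 0 1 t = 1 := by
    rw [stdNormalCDF, ← integral_gaussianPDFReal_eq_one 0 one_ne_zero,
      ← integral_add_compl measurableSet_Iic (integrable_gaussianPDFReal 0 1), compl_Iic]
  linarith

lemma stdNormalCDF_zero : stdNormalCDF 0 = 2⁻¹ := by
  have := stdNormalCDF_neg 0
  rw [neg_zero] at this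
  linarith

lemma binEntropy_stdNormalCDF_abs (s : ℝ) :
    binEntropy (stdNormalCDF |s|) = binEntropy (stdNormalCDF s) := by
  rcases abs_cases s with ⟨h, _⟩ | ⟨h, _⟩
  · rw [h]
  · rw [h, stdNormalCDF_neg, binEntropy_one_sub]

lemma antitoneOn_binEntropy_stdNormalCDF :
    AntitoneOn (fun s => binEntropy (stdNormalCDF s)) (Ici 0) := by
  have h_mem {s : ℝ} (hs : s ∈ Ici 0) : stdNormalCDF s ∈ Icc 2⁻¹ 1 :=
    ⟨stdNormalCDF_zero ▸ monotone_stdNormalCDF hs, stdNormalCDF_le_one s⟩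
  exact fun _ hs _ ht hst =>
    binEntropy_strictAntiOn.antitoneOn (h_mem hs) (h_mem ht) (monotone_stdNormalCDF hst)

lemma binEntropy_stdNormalCDF_le_of_abs_le {s₁ s₂ : ℝ} (h : |s₁| ≤ |s₂|) :
    binEntropy (stdNormalCDF s₂) ≤ binEntropy (stdNormalCDF s₁) := by
  rw [← binEntropy_stdNormalCDF_abs s₁, ← binEntropy_stdNormalCDF_abs s₂]
  exact antitoneOn_binEntropy_stdNormalCDF (abs_nonneg s₁) (abs_nonneg s₂) h

lemma integrable_binEntropy_comp {α : Type*} [MeasurableSpace α] {μ : Measure α}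
    [IsFiniteMeasure μ] {f : α → ℝ} (hf : Measurable f) (h₀ : ∀ x, 0 ≤ f x)
    (h₁ : ∀ x, f x ≤ 1) : Integrable (fun x => binEntropy (f x)) μ := by
  refine .mono' (integrable_const (log 2))
    (binEntropy_continuous.measurable.comp hf).aestronglyMeasurable (ae_of_all _ fun x => ?_)
  rw [norm_eq_abs, abs_of_nonneg (binEntropy_nonneg (h₀ x) (h₁ x))]
  exact binEntropy_le_log_two

lemma integral_binEntropy_stdNormalCDF_mul_le {μ : Measure ℝ} [IsFiniteMeasure μ] {q₁ q₂ : ℝ}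
    (h : |q₁| ≤ |q₂|) :
    ∫ t, binEntropy (stdNormalCDF (t * q₂)) ∂μ ≤ ∫ t, binEntropy (stdNormalCDF (t * q₁)) ∂μ := by
  have h_int (q : ℝ) : Integrable (fun t => binEntropy (stdNormalCDF (t * q))) μ :=
    integrable_binEntropy_comp (monotone_stdNormalCDF.measurable.comp (measurable_mul_const q))
      (fun _ => stdNormalCDF_nonneg _) (fun _ => stdNormalCDF_le_one _)
  refine integral_mono (h_int q₂) (h_int q₁) fun t => binEntropy_stdNormalCDF_le_of_abs_le ?_
  rw [abs_mul, abs_mul]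
  exact mul_le_mul_of_nonneg_left h (abs_nonneg t)

lemma dotProduct_self_nonneg {n R : Type*} [Fintype n] [Ring R] [LinearOrder R]
    [IsStrictOrderedRing R] (v : n → R) : 0 ≤ v ⬝ᵥ v :=
  Fintype.sum_nonneg fun i => mul_self_nonneg (v i)

lemma abs_dotProduct_le_sqrt_mul_sqrt {n : Type*} [Fintype n] (v w : n → ℝ) :
    |v ⬝ᵥ w| ≤ √(v ⬝ᵥ v) * √(w ⬝ᵥ w) := by
  rw [← sqrt_mul (dotProduct_self_nonneg v)]
  refine abs_le_sqrt ?_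
  simpa only [dotProduct, sq] using Finset.sum_mul_sq_le_sq_mul_sq Finset.univ v w

lemma dotProduct_div_sqrt_smul_self {n : Type*} [Fintype n] (c : ℝ) (v : n → ℝ) :
    v ⬝ᵥ ((c / √(v ⬝ᵥ v)) • v) = c * √(v ⬝ᵥ v) := by
  rw [dotProduct_smul, smul_eq_mul, div_mul_eq_mul_div, mul_div_assoc, div_sqrt]

lemma abs_div_sqrt_le_abs_div_sqrt {x y u v : ℝ} (hxy : |x| ≤ |y|) (hu : 0 < u) (huv : u ≤ v) :
    |x / √v| ≤ |y / √u| := by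
  rw [abs_div, abs_div, abs_of_nonneg (sqrt_nonneg v), abs_of_nonneg (sqrt_nonneg u)]
  exact div_le_div₀ (abs_nonneg y) hxy (sqrt_pos.2 hu) (sqrt_le_sqrt huv)

theorem condEntY_minimized_general (N : ℕ) (γ c : ℝ) (hγ : 0 < γ)
    (a : Fin N → ℝ) :
    (∀ s₁ s₂ : ℝ, |s₁| ≤ |s₂| →
        Real.binEntropy (stdNormalCDF s₂) ≤ Real.binEntropy (stdNormalCDF s₁)) ∧
      ∀ (wα' : Fin N → ℝ) (Wβ' : Matrix (Fin N) (Fin (N - 1)) ℝ),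
        (wα' = (c / Real.sqrt (a ⬝ᵥ a)) • a ∨ wα' = -((c / Real.sqrt (a ⬝ᵥ a)) • a)) →
        Wβ'ᵀ.mulVec a = 0 →
        ∀ (wα : Fin N → ℝ) (Wβ : Matrix (Fin N) (Fin (N - 1)) ℝ),
          Real.sqrt (wα ⬝ᵥ wα) ≤ c →
          condEntY γ a wα' Wβ' ≤ condEntY γ a wα Wβ := by
  refine ⟨fun _ _ => binEntropy_stdNormalCDF_le_of_abs_le, ?_⟩
  rintro wα' Wβ' hwα' hWβ' wα Wβ hwα
  have hc : 0 ≤ c := (sqrt_nonneg _).trans hwα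
  have h_opt : |a ⬝ᵥ wα'| = c * √(a ⬝ᵥ a) := by
    rcases hwα' with rfl | rfl <;>
      simp only [dotProduct_neg, abs_neg, dotProduct_div_sqrt_smul_self, abs_mul,
        abs_of_nonneg hc, abs_of_nonneg (sqrt_nonneg _)]
  have h_num : |a ⬝ᵥ wα| ≤ |a ⬝ᵥ wα'| := by
    rw [h_opt, mul_comm]
    exact (abs_dotProduct_le_sqrt_mul_sqrt a wα).trans
      (mul_le_mul_of_nonneg_left hwα (sqrt_nonneg _))
  have h_den_pos : 0 < 1 + Wβ'ᵀ *ᵥ a ⬝ᵥ Wβ'ᵀ *ᵥ a + γ * (a ⬝ᵥ a) := by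
    rw [hWβ', zero_dotProduct, add_zero]
    exact add_pos_of_pos_of_nonneg one_pos (mul_nonneg hγ.le (dotProduct_self_nonneg a))
  have h_den_le : 1 + Wβ'ᵀ *ᵥ a ⬝ᵥ Wβ'ᵀ *ᵥ a + γ * (a ⬝ᵥ a) ≤
      1 + Wβᵀ *ᵥ a ⬝ᵥ Wβᵀ *ᵥ a + γ * (a ⬝ᵥ a) := by
    rw [hWβ', zero_dotProduct]
    linarith [dotProduct_self_nonneg (Wβᵀ *ᵥ a)]
  simp only [condEntY, mul_div_assoc]
  exact integral_binEntropy_stdNormalCDF_mul_le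
    (abs_div_sqrt_le_abs_div_sqrt h_num h_den_pos h_den_le)

/-- For each fixed `t`, `h_b(Φ(s))` is a monotonically decreasing function of `|s|`;
consequently, over `‖w_α‖₂ ≤ c` and arbitrary `W_β`, the conditional entropy `H(Y ∣ α)` is
minimized when `w_α = ± c a/‖a‖₂` and `W_βᵀ a = 0`. -/
theorem condEntY_minimized (N : ℕ) (γ c : ℝ) (hγ : 0 < γ) (hc : 0 < c)
    (a : Fin N → ℝ) (ha : a ≠ 0) :
    (∀ s₁ s₂ : ℝ, |s₁| ≤ |s₂| →
        Real.binEntropy (stdNormalCDF s₂) ≤ Real.binEntropy (stdNormalCDF s₁)) ∧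
      ∀ (wα' : Fin N → ℝ) (Wβ' : Matrix (Fin N) (Fin (N - 1)) ℝ),
        (wα' = (c / Real.sqrt (a ⬝ᵥ a)) • a ∨ wα' = -((c / Real.sqrt (a ⬝ᵥ a)) • a)) →
        Wβ'ᵀ.mulVec a = 0 →
        ∀ (wα : Fin N → ℝ) (Wβ : Matrix (Fin N) (Fin (N - 1)) ℝ),
          Real.sqrt (wα ⬝ᵥ wα) ≤ c →
          condEntY γ a wα' Wβ' ≤ condEntY γ a wα Wβ :=
  condEntY_minimized_general N γ c hγ a
end
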